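/- Let p and Q be nonzero complex numbers. Then the quantum R matrix Ř⁴ satisfies the braid-form quantum Yang–Baxter equation: (Ř⁴ ⊗ I₄)(I₄ ⊗ Ř⁴)(Ř⁴ ⊗ I₄) = (I₄ ⊗ Ř⁴)(Ř⁴ ⊗ I₄)(I₄ ⊗ Ř⁴), an identity of 64×64 complex matrices. -/

import Mathlib

open Matrix

noncomputable section

/-- The elementary matrix `E(a,b;c,d)` on `ℂ⁴ ⊗ ℂ⁴`. -/
def E (a b c d : Fin 4) : Matrix (Fin 4 × Fin 4) (Fin 4 × Fin 4) ℂ :=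
  Matrix.single (a, b) (c, d) 1

/-- `M ⊗ I₄`, acting on the first two factors of `ℂ⁴ ⊗ ℂ⁴ ⊗ ℂ⁴`. -/
def op12 (M : Matrix (Fin 4 × Fin 4) (Fin 4 × Fin 4) ℂ) :
    Matrix (Fin 4 × Fin 4 × Fin 4) (Fin 4 × Fin 4 × Fin 4) ℂ :=
  Matrix.of fun x y => M (x.1, x.2.1) (y.1, y.2.1) * (if x.2.2 = y.2.2 then 1 else 0)

/-- `I₄ ⊗ M`, acting on the last two factors of `ℂ⁴ ⊗ ℂ⁴ ⊗ ℂ⁴`. -/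
def op23 (M : Matrix (Fin 4 × Fin 4) (Fin 4 × Fin 4) ℂ) :
    Matrix (Fin 4 × Fin 4 × Fin 4) (Fin 4 × Fin 4 × Fin 4) ℂ :=
  Matrix.of fun x y => (if x.1 = y.1 then 1 else 0) * M (x.2.1, x.2.2) (y.2.1, y.2.2)

/-- The left quantum partial trace `T(C, M)_{a,b} = Σ_{c,d} C_{d,c} M_{(c,a),(d,b)}`. -/
def ptrace (C : Matrix (Fin 4) (Fin 4) ℂ) (M : Matrix (Fin 4 × Fin 4) (Fin 4 × Fin 4) ℂ) :
    Matrix (Fin 4) (Fin 4) ℂ :=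
  Matrix.of fun a b => ∑ c : Fin 4, ∑ d : Fin 4, C d c * M (c, a) (d, b)

/-- The quantum R matrix `Ř⁴` (Case 4), with complex parameters `p, Q`
(indices shifted from 1–4 to 0–3). -/
def R4 (p Q : ℂ) : Matrix (Fin 4 × Fin 4) (Fin 4 × Fin 4) ℂ :=
  E 0 0 0 0
  - (p ^ 2 * Q⁻¹ ^ 2) • (E 1 1 1 1 + E 2 2 2 2)
  + (p ^ 4) • E 3 3 3 3
  + (p * Q⁻¹) • (E 0 1 1 0 + E 0 2 2 0 + E 1 0 0 1 + E 2 0 0 2)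
  + (p ^ 3 * Q⁻¹) • (E 1 3 3 1 + E 2 3 3 2 + E 3 1 1 3 + E 3 2 2 3)
  + (p ^ 2 * Q⁻¹ ^ 2) • (E 0 3 3 0 + E 3 0 0 3)
  - (p ^ 2) • (E 1 2 2 1 + E 2 1 1 2)

/-! Every term of `Ř⁴` sends `v_c ⊗ v_d` to a multiple of `v_d ⊗ v_c`, so `Ř⁴` is the flip
composed with a diagonal matrix. Both sides of the braid relation therefore send
`v_a ⊗ v_b ⊗ v_c` to `v_c ⊗ v_b ⊗ v_a`, each picking up one weight from every pair of
factors that gets exchanged: the same three weights on both sides, in a different order. -/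

def flipSupported (n R : Type*) [CommSemiring R] :
    Submodule R (Matrix (n × n) (n × n) R) where
  carrier := {M | ∀ x y, y ≠ x.swap → M x y = 0}
  add_mem' hM hN x y hxy := by simp [hM x y hxy, hN x y hxy]
  zero_mem' _ _ _ := rfl
  smul_mem' c M hM x y hxy := by simp [hM x y hxy]

lemma E_mem_flipSupported (a b : Fin 4) : E a b b a ∈ flipSupported (Fin 4) ℂ := by
  rintro x y hxy
  simp only [E, Matrix.single_apply, ite_eq_right_iff, and_imp]
  rintro rfl rfl
  exact absurd rfl hxy

lemma R4_mem_flipSupported (p Q : ℂ) : R4 p Q ∈ flipSupported (Fin 4) ℂ := by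
  unfold R4
  repeat first
    | apply Submodule.add_mem | apply Submodule.sub_mem | apply Submodule.smul_mem
    | apply E_mem_flipSupported

section
variable {M : Matrix (Fin 4 × Fin 4) (Fin 4 × Fin 4) ℂ} (hM : M ∈ flipSupported (Fin 4) ℂ)
  (N : Matrix (Fin 4 × Fin 4 × Fin 4) (Fin 4 × Fin 4 × Fin 4) ℂ)
include hM

lemma op12_mul_apply_of_mem_flipSupported (x y : Fin 4 × Fin 4 × Fin 4) :
    (op12 M * N) x y = M (x.1, x.2.1) (x.2.1, x.1) * N (x.2.1, x.1, x.2.2) y := by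
  rw [Matrix.mul_apply, Fintype.sum_eq_single (x.2.1, x.1, x.2.2)]
  · simp [op12]
  · rintro ⟨a, b, c⟩ hz
    by_cases hc : x.2.2 = c
    · simp [op12, hM _ _ (by aesop : (a, b) ≠ (x.1, x.2.1).swap)]
    · simp [op12, hc]

lemma op23_mul_apply_of_mem_flipSupported (x y : Fin 4 × Fin 4 × Fin 4) :
    (op23 M * N) x y = M (x.2.1, x.2.2) (x.2.2, x.2.1) * N (x.1, x.2.2, x.2.1) y := by
  rw [Matrix.mul_apply, Fintype.sum_eq_single (x.1, x.2.2, x.2.1)]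
  · simp [op23]
  · rintro ⟨a, b, c⟩ hz
    by_cases ha : x.1 = a
    · simp [op23, hM _ _ (by aesop : (b, c) ≠ (x.2.1, x.2.2).swap)]
    · simp [op23, ha]

end

theorem R4_QYBE_general (p Q : ℂ) :
    op12 (R4 p Q) * op23 (R4 p Q) * op12 (R4 p Q) =
      op23 (R4 p Q) * op12 (R4 p Q) * op23 (R4 p Q) := by
  have hR := R4_mem_flipSupported p Q
  rw [← Matrix.mul_one (op12 _ * _ * _), ← Matrix.mul_one (op23 _ * _ * _)]
  ext ⟨a, b, c⟩ y
  simp only [Matrix.mul_assoc, op12_mul_apply_of_mem_flipSupported hR,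
    op23_mul_apply_of_mem_flipSupported hR, Matrix.one_apply]
  ring

/-- The quantum R matrix `Ř⁴` satisfies the braid-form quantum Yang–Baxter equation. -/
theorem R4_QYBE (p Q : ℂ) (hp : p ≠ 0) (hQ : Q ≠ 0) :
    op12 (R4 p Q) * op23 (R4 p Q) * op12 (R4 p Q) =
      op23 (R4 p Q) * op12 (R4 p Q) * op23 (R4 p Q) :=
  R4_QYBE_general p Q
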